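/- arXiv:2408.10781 — 4 statements merged into one kernel-verified Lean document; each statement's English description precedes it below -/
import Mathlib

section
/- Let 1 ≤ k < n and let λ = (λ_1, …, λ_n) ∈ Γ_k with λ_1 ≥ λ_2 ≥ … ≥ λ_n. Then λ_k > 0 and |λ_n| ≤ (n − k)·λ_k, with strict inequality when λ_n < 0. -/
noncomputable def esymm (n m : ℕ) (lam : Fin n → ℝ) : ℝ :=
  ∑ s ∈ (Finset.univ : Finset (Fin n)).powersetCard m, ∏ i ∈ s, lam i

def GardingCone (n k : ℕ) : Set (Fin n → ℝ) :=
  {lam | ∀ j, 1 ≤ j → j ≤ k → 0 < esymm n j lam}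

/-!
Write `P_m` for the multiset `{λ_1, …, λ_m}` of the `m` largest entries. If a multiset in `Γ_k`
has more than `k` entries, deleting its smallest entry `a` keeps it in `Γ_k`: when `a ≤ 0`, the
relation `σ_j = σ_j' + a σ_{j-1}'` shows that the `σ_j'` of the rest are at least the `σ_j`, and
when `a > 0` all remaining entries are positive. So every `P_m` with `m ≥ k` lies in `Γ_k`; the
same argument from `P_k` to `P_{k-1}`, where `σ_k` vanishes, forces `λ_k > 0`.

Next, `σ_k(P_m) ≤ (m - k + 1) λ_k σ_{k-1}(P_m)` by induction on `m ≥ k - 1`. Adding an entry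
`a ≤ λ_k` increases the ratio `σ_k / σ_{k-1}` by at most `λ_k` when `a ≥ 0`, and does not
increase it when `a < 0`, because of the Newton-type inequality `σ_k σ_{k-2} ≤ σ_{k-1}²`. That
inequality holds for every real multiset: `∏ (X + λ_i)` is real-rooted, real-rootedness survives
differentiation (Rolle), and for a real-rooted polynomial the three lowest coefficients satisfy
`2 c₀ c₂ ≤ c₁²`. Finally `0 < σ_k(λ) = σ_k(P_{n-1}) + λ_n σ_{k-1}(P_{n-1})
≤ ((n - k) λ_k + λ_n) σ_{k-1}(P_{n-1})`, so `-λ_n < (n - k) λ_k`.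
-/

open Finset Polynomial
open scoped Nat

namespace Multiset

section CommSemiring

variable {R : Type*} [CommSemiring R]

theorem esymm_zero (s : Multiset R) : s.esymm 0 = 1 := by
  simp [esymm]

theorem esymm_eq_zero_of_card_lt {s : Multiset R} {j : ℕ} (h : card s < j) : s.esymm j = 0 := by
  simp [esymm, powersetCard_eq_empty _ h]

theorem esymm_cons_succ (a : R) (s : Multiset R) (j : ℕ) :
    (a ::ₘ s).esymm (j + 1) = s.esymm (j + 1) + a * s.esymm j := by
  simp only [esymm, powersetCard_cons, map_add, sum_add, map_map, Function.comp_def, prod_cons,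
    sum_map_mul_left]

end CommSemiring

theorem esymm_pos_of_forall_pos {s : Multiset ℝ} (hs : ∀ x ∈ s, 0 < x) {j : ℕ}
    (hj : j ≤ card s) : 0 < s.esymm j := by
  have hne : s.powersetCard j ≠ 0 := by
    rw [← card_pos, card_powersetCard]
    exact Nat.choose_pos hj
  simpa [esymm] using sum_lt_sum_of_nonempty (f := fun _ => (0 : ℝ)) (g := prod) hne
    fun t ht => prod_pos fun x hx => hs x (subset_of_le (mem_powersetCard.mp ht).1 hx)

/-- Newton's inequality in top degree, where it holds with the factor `2` by induction: for
`s = a ::ₘ t` the difference of the two sides is `E₂² + a² (E₁² - 2 E₂ E₀)`, with `E₀, E₁, E₂`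
the three top `esymm`s of `t` involved. -/
theorem two_mul_esymm_mul_le_sq_of_card_le (s : Multiset ℝ) {j : ℕ} (hs : card s ≤ j + 2) :
    2 * s.esymm (j + 2) * s.esymm j ≤ s.esymm (j + 1) ^ 2 := by
  induction s using Multiset.induction_on generalizing j with
  | empty =>
    rw [esymm_eq_zero_of_card_lt (s := 0) (j := j + 2) (by simp), mul_zero, zero_mul]
    exact sq_nonneg _
  | cons a t ih =>
    rw [card_cons] at hs
    have htop : t.esymm (j + 2) = 0 := esymm_eq_zero_of_card_lt (by omega)
    rcases j with _ | j
    · simp only [zero_add, esymm_cons_succ, esymm_zero, htop]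
      nlinarith [sq_nonneg (t.esymm 1), sq_nonneg a]
    · simp only [esymm_cons_succ, htop]
      nlinarith [sq_nonneg (t.esymm (j + 2)),
        mul_le_mul_of_nonneg_left (ih (j := j) (by omega)) (sq_nonneg a)]

end Multiset

namespace Polynomial

theorem card_roots_derivative_eq_natDegree {p : ℝ[X]}
    (hp : Multiset.card p.roots = p.natDegree) :
    Multiset.card (derivative p).roots = (derivative p).natDegree :=
  le_antisymm (card_roots' _) <| by
    have := card_roots_le_derivative p
    have := natDegree_derivative_le p
    omega

theorem card_roots_iterate_derivative_eq_natDegree {p : ℝ[X]}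
    (hp : Multiset.card p.roots = p.natDegree) (r : ℕ) :
    Multiset.card (derivative^[r] p).roots = (derivative^[r] p).natDegree := by
  induction r with
  | zero => exact hp
  | succ r ih =>
    rw [Function.iterate_succ_apply']
    exact card_roots_derivative_eq_natDegree ih

theorem two_mul_coeff_zero_mul_coeff_two_le_sq {q : ℝ[X]}
    (hq : Multiset.card q.roots = q.natDegree) :
    2 * q.coeff 0 * q.coeff 2 ≤ q.coeff 1 ^ 2 := by
  obtain hd | ⟨j, hj⟩ : q.natDegree < 2 ∨ ∃ j, q.natDegree = j + 2 :=
    (lt_or_ge _ _).imp_right fun h => ⟨_, (Nat.sub_add_cancel h).symm⟩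
  · rw [coeff_eq_zero_of_natDegree_lt hd, mul_zero]
    exact sq_nonneg _
  have vieta (i : ℕ) (hi : i ≤ 2) := coeff_eq_esymm_roots_of_card hq (k := i) (by omega)
  rw [vieta 0 (by norm_num), vieta 1 (by norm_num), vieta 2 le_rfl, hj, Nat.sub_zero,
    show j + 2 - 1 = j + 1 by omega, Nat.add_sub_cancel]
  have newton := q.roots.two_mul_esymm_mul_le_sq_of_card_le (j := j) (by omega)
  calc _ = q.leadingCoeff ^ 2 * ((-1) ^ j) ^ 2 *
        (2 * q.roots.esymm (j + 2) * q.roots.esymm j) := by ring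
    _ ≤ q.leadingCoeff ^ 2 * ((-1) ^ j) ^ 2 * q.roots.esymm (j + 1) ^ 2 := by gcongr
    _ = _ := by ring

theorem factorial_mul_coeff_iterate_derivative (p : ℝ[X]) (r i : ℕ) :
    (i ! : ℝ) * (derivative^[r] p).coeff i = (i + r)! * p.coeff (i + r) := by
  rw [coeff_iterate_derivative, nsmul_eq_mul, ← mul_assoc, ← Nat.cast_mul]
  congr 2
  simpa using Nat.factorial_mul_descFactorial (Nat.le_add_left r i)

/-- The `r`-th derivative is again real-rooted, and its three lowest coefficients are
`r! p_r`, `(r+1)! p_{r+1}` and `(r+2)!/2 · p_{r+2}`. -/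
theorem coeff_mul_coeff_add_two_le_sq {p : ℝ[X]} (hp : Multiset.card p.roots = p.natDegree)
    (r : ℕ) : p.coeff r * p.coeff (r + 2) ≤ p.coeff (r + 1) ^ 2 := by
  have key := two_mul_coeff_zero_mul_coeff_two_le_sq
    (card_roots_iterate_derivative_eq_natDegree hp r)
  have h0 := factorial_mul_coeff_iterate_derivative p r 0
  have h1 := factorial_mul_coeff_iterate_derivative p r 1
  have h2 := factorial_mul_coeff_iterate_derivative p r 2
  simp only [zero_add, Nat.factorial_zero, Nat.factorial_one, Nat.cast_one, one_mul,
    Nat.factorial_two] at h0 h1 h2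
  rw [add_comm 1 r, Nat.factorial_succ] at h1
  rw [add_comm 2 r, Nat.factorial_succ, Nat.factorial_succ] at h2
  rw [h0, h1] at key
  push_cast at key h2
  have hscaled : (r + 2) * (p.coeff r * p.coeff (r + 2)) ≤ (r + 1) * p.coeff (r + 1) ^ 2 := by
    have : (r ! : ℝ) ^ 2 * (r + 1) *
        ((r + 2) * (p.coeff r * p.coeff (r + 2)) - (r + 1) * p.coeff (r + 1) ^ 2) ≤ 0 := by
      linear_combination key - (r ! : ℝ) * p.coeff r * h2
    exact le_of_sub_nonpos (nonpos_of_mul_nonpos_right this (by positivity))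
  nlinarith [sq_nonneg (p.coeff (r + 1)), r.cast_nonneg (α := ℝ)]

theorem card_roots_multiset_prod_X_add_C {R : Type*} [CommRing R] [IsDomain R] (s : Multiset R) :
    Multiset.card (s.map fun a => X + C a).prod.roots =
      (s.map fun a => X + C a).prod.natDegree := by
  have h : (s.map fun a => X + C a).prod = ((s.map Neg.neg).map fun a => X - C a).prod := by
    simp [Multiset.map_map, sub_eq_add_neg]
  rw [h, roots_multiset_prod_X_sub_C, natDegree_multiset_prod_X_sub_C_eq_card]

end Polynomial

namespace Multiset

theorem esymm_mul_esymm_le_sq (s : Multiset ℝ) (j : ℕ) :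
    s.esymm (j + 2) * s.esymm j ≤ s.esymm (j + 1) ^ 2 := by
  rcases lt_or_ge (card s) (j + 2) with hs | hs
  · rw [esymm_eq_zero_of_card_lt hs, zero_mul]
    exact sq_nonneg _
  obtain ⟨r, hr⟩ : ∃ r, card s = r + 2 + j := ⟨card s - (j + 2), by omega⟩
  have := coeff_mul_coeff_add_two_le_sq (card_roots_multiset_prod_X_add_C s) r
  rwa [prod_X_add_C_coeff s (by omega), prod_X_add_C_coeff s (by omega),
    prod_X_add_C_coeff s (by omega), hr, show r + 2 + j - r = j + 2 by omega,
    show r + 2 + j - (r + 2) = j by omega, show r + 2 + j - (r + 1) = j + 1 by omega] at this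

theorem esymm_le_esymm_cons {a : ℝ} {s : Multiset ℝ} {j : ℕ} (ha : 0 ≤ a)
    (hs : 0 ≤ s.esymm (j - 1)) : s.esymm j ≤ (a ::ₘ s).esymm j := by
  cases j with
  | zero => rw [esymm_zero, esymm_zero]
  | succ j =>
    rw [esymm_cons_succ]
    exact le_add_of_nonneg_right (mul_nonneg ha hs)

theorem esymm_succ_cons_mul_le {a : ℝ} (ha : a ≤ 0) (s : Multiset ℝ) (j : ℕ) :
    (a ::ₘ s).esymm (j + 1) * s.esymm j ≤ s.esymm (j + 1) * (a ::ₘ s).esymm j := by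
  cases j with
  | zero =>
    rw [esymm_cons_succ, esymm_zero, esymm_zero]
    linarith
  | succ j =>
    rw [esymm_cons_succ, esymm_cons_succ]
    nlinarith [mul_le_mul_of_nonpos_left (esymm_mul_esymm_le_sq s j) ha]

/-- `GardingCone` for multisets; the extra index `j = 0` is harmless since `esymm s 0 = 1`. -/
def InGardingCone (k : ℕ) (s : Multiset ℝ) : Prop :=
  ∀ j ≤ k, 0 < s.esymm j

namespace InGardingCone

variable {k : ℕ} {a : ℝ} {s : Multiset ℝ}

theorem mono {k' : ℕ} (h : InGardingCone k s) (hk : k' ≤ k) : InGardingCone k' s :=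
  fun j hj => h j (hj.trans hk)

theorem of_forall_pos (hs : ∀ x ∈ s, 0 < x) (hk : k ≤ card s) : InGardingCone k s :=
  fun _ hj => esymm_pos_of_forall_pos hs (hj.trans hk)

theorem of_cons_of_nonpos (h : InGardingCone k (a ::ₘ s)) (ha : a ≤ 0) : InGardingCone k s := by
  intro j hj
  induction j with
  | zero => rw [esymm_zero]; exact one_pos
  | succ j ih =>
    have hcons := h (j + 1) hj
    rw [esymm_cons_succ] at hcons
    nlinarith [ih (by omega)]

theorem of_cons_of_forall_le (h : InGardingCone k (a ::ₘ s)) (hmin : ∀ x ∈ s, a ≤ x)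
    (hk : k ≤ card s) : InGardingCone k s := by
  rcases le_or_gt a 0 with ha | ha
  · exact h.of_cons_of_nonpos ha
  · exact of_forall_pos (fun x hx => ha.trans_le (hmin x hx)) hk

theorem pos_of_cons (h : InGardingCone k (a ::ₘ s)) (hk : card s < k) : 0 < a := by
  by_contra! ha
  exact (h.of_cons_of_nonpos ha k le_rfl).ne' (esymm_eq_zero_of_card_lt hk)

end InGardingCone

/-- For `a ≥ 0` this is immediate; for `a < 0` the ratio `σ_{j+1} / σ_j` does not even grow,
by `esymm_succ_cons_mul_le`. -/
theorem esymm_succ_cons_le {a c r : ℝ} {s : Multiset ℝ} {j : ℕ} (hs : InGardingCone j s)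
    (has : InGardingCone j (a ::ₘ s)) (hc : 0 ≤ c) (hac : a ≤ c) (hr : 0 ≤ r)
    (h : s.esymm (j + 1) ≤ r * c * s.esymm j) :
    (a ::ₘ s).esymm (j + 1) ≤ (r + 1) * c * (a ::ₘ s).esymm j := by
  have hB := hs j le_rfl
  have hB' := has j le_rfl
  rcases le_or_gt 0 a with ha | ha
  · have hBB' := esymm_le_esymm_cons ha (hs (j - 1) (Nat.sub_le j 1)).le
    rw [esymm_cons_succ]
    calc s.esymm (j + 1) + a * s.esymm j ≤ r * c * s.esymm j + c * s.esymm j :=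
          add_le_add h (mul_le_mul_of_nonneg_right hac hB.le)
      _ = (r + 1) * c * s.esymm j := by ring
      _ ≤ (r + 1) * c * (a ::ₘ s).esymm j := mul_le_mul_of_nonneg_left hBB' (by positivity)
  · have hratio :
        (a ::ₘ s).esymm (j + 1) * s.esymm j ≤ r * c * (a ::ₘ s).esymm j * s.esymm j :=
      calc _ ≤ s.esymm (j + 1) * (a ::ₘ s).esymm j := esymm_succ_cons_mul_le ha.le s j
        _ ≤ r * c * s.esymm j * (a ::ₘ s).esymm j := mul_le_mul_of_nonneg_right h hB'.le
        _ = _ := by ring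
    nlinarith [le_of_mul_le_mul_right hratio hB, mul_nonneg hc hB'.le]

theorem neg_lt_of_esymm_succ_cons_pos {a R : ℝ} {s : Multiset ℝ} {j : ℕ}
    (h : 0 < (a ::ₘ s).esymm (j + 1)) (hB : 0 < s.esymm j)
    (hs : s.esymm (j + 1) ≤ R * s.esymm j) : -a < R := by
  rw [esymm_cons_succ] at h
  by_contra! hR
  nlinarith [mul_le_mul_of_nonneg_right hR hB.le]

end Multiset

open Multiset

theorem mem_GardingCone_iff {n k : ℕ} {lam : Fin n → ℝ} :
    lam ∈ GardingCone n k ↔ InGardingCone k (univ.val.map lam) := by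
  have hesymm (j : ℕ) : esymm n j lam = (univ.val.map lam).esymm j :=
    (Finset.esymm_map_val lam univ j).symm
  refine ⟨fun h j hj => ?_, fun h j _ hjk => hesymm j ▸ h j hjk⟩
  rcases j with _ | j
  · rw [Multiset.esymm_zero]; exact one_pos
  · exact hesymm _ ▸ h _ (Nat.succ_pos j) hj

section Prefix

variable {n : ℕ} (lam : Fin n → ℝ)

def prefixMultiset (m : ℕ) : Multiset ℝ :=
  (univ.filter fun i : Fin n => (i : ℕ) < m).val.map lam

theorem prefixMultiset_self : prefixMultiset lam n = univ.val.map lam := by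
  simp [prefixMultiset]

theorem prefixMultiset_succ {m : ℕ} (h : m < n) :
    prefixMultiset lam (m + 1) = lam ⟨m, h⟩ ::ₘ prefixMultiset lam m := by
  have hinsert : (univ.filter fun i : Fin n => (i : ℕ) < m + 1)
      = insert ⟨m, h⟩ (univ.filter fun i : Fin n => (i : ℕ) < m) := by
    ext i
    simp only [Finset.mem_filter, mem_univ, true_and, mem_insert, Fin.ext_iff]
    omega
  rw [prefixMultiset, hinsert, insert_val_of_notMem (by simp), Multiset.map_cons, prefixMultiset]

theorem card_prefixMultiset {m : ℕ} (h : m ≤ n) : card (prefixMultiset lam m) = m := by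
  rw [prefixMultiset, Multiset.card_map, ← Finset.card_def, Fin.card_filter_val_lt,
    min_eq_right h]

variable {lam}

theorem le_of_mem_prefixMultiset (hlam : Antitone lam) {m : ℕ} (h : m < n) {x : ℝ}
    (hx : x ∈ prefixMultiset lam m) : lam ⟨m, h⟩ ≤ x := by
  obtain ⟨i, hi, rfl⟩ := Multiset.mem_map.mp hx
  simp only [Finset.mem_val, Finset.mem_filter, mem_univ, true_and] at hi
  exact hlam (Fin.le_def.mpr hi.le)

theorem inGardingCone_prefixMultiset (hlam : Antitone lam) {k : ℕ}
    (hΓ : InGardingCone k (univ.val.map lam)) {m : ℕ} (hkm : k ≤ m) (hmn : m ≤ n) :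
    InGardingCone k (prefixMultiset lam m) := by
  refine Nat.decreasingInduction
    (motive := fun m _ => k ≤ m → InGardingCone k (prefixMultiset lam m))
    (fun m h ih hkm => ?_) (fun _ => by rwa [prefixMultiset_self]) hmn hkm
  have hsucc := ih (hkm.trans m.le_succ)
  rw [prefixMultiset_succ lam h] at hsucc
  exact hsucc.of_cons_of_forall_le (fun x hx => le_of_mem_prefixMultiset hlam h hx)
    (by rw [card_prefixMultiset lam h.le]; exact hkm)

theorem apply_pos_of_inGardingCone (hlam : Antitone lam) {j : ℕ} (hj : j < n)
    (hΓ : InGardingCone (j + 1) (univ.val.map lam)) : 0 < lam ⟨j, hj⟩ := by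
  have h := inGardingCone_prefixMultiset hlam hΓ le_rfl hj
  rw [prefixMultiset_succ lam hj] at h
  exact h.pos_of_cons (by rw [card_prefixMultiset lam hj.le]; omega)

theorem esymm_succ_prefixMultiset_le (hlam : Antitone lam) {j : ℕ} (hj : j < n)
    (hΓ : InGardingCone j (univ.val.map lam)) (hc : 0 ≤ lam ⟨j, hj⟩) {m : ℕ}
    (hjm : j ≤ m) (hmn : m ≤ n) : (prefixMultiset lam m).esymm (j + 1)
      ≤ ((m : ℝ) - j) * lam ⟨j, hj⟩ * (prefixMultiset lam m).esymm j := by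
  induction m, hjm using Nat.le_induction with
  | base =>
    rw [esymm_eq_zero_of_card_lt (by rw [card_prefixMultiset lam hj.le]; omega), sub_self,
      zero_mul, zero_mul]
  | succ m hjm ih =>
    have hm : m < n := by omega
    rw [prefixMultiset_succ lam hm, Nat.cast_succ, add_sub_right_comm]
    refine esymm_succ_cons_le (inGardingCone_prefixMultiset hlam hΓ hjm hm.le) ?_ hc
      (hlam (Fin.le_def.mpr hjm)) (by simpa using hjm) (ih hm.le)
    rw [← prefixMultiset_succ lam hm]
    exact inGardingCone_prefixMultiset hlam hΓ (by omega) hm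

theorem neg_apply_last_lt (hlam : Antitone lam) {j : ℕ} (hjn : j + 1 < n)
    (hΓ : InGardingCone (j + 1) (univ.val.map lam)) :
    -lam ⟨n - 1, by omega⟩ < ((n : ℝ) - (j + 1 : ℕ)) * lam ⟨j, by omega⟩ := by
  have hlast :
      prefixMultiset lam n = lam ⟨n - 1, by omega⟩ ::ₘ prefixMultiset lam (n - 1) := by
    rw [← prefixMultiset_succ, Nat.sub_add_cancel (by omega)]
  have hpos := hΓ (j + 1) le_rfl
  rw [← prefixMultiset_self, hlast] at hpos
  have hB := inGardingCone_prefixMultiset hlam (hΓ.mono j.le_succ) (m := n - 1)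
    (by omega) (by omega) j le_rfl
  have hbound := esymm_succ_prefixMultiset_le hlam (by omega) (hΓ.mono j.le_succ)
    (apply_pos_of_inGardingCone hlam (by omega) hΓ).le (m := n - 1) (by omega) (by omega)
  rw [Nat.cast_sub (by omega : 1 ≤ n), Nat.cast_one, sub_sub, add_comm 1 (j : ℝ),
    ← Nat.cast_add_one] at hbound
  exact neg_lt_of_esymm_succ_cons_pos hpos hB hbound

end Prefix

/-- Let `1 ≤ k < n` and `λ ∈ Γ_k` with `λ_1 ≥ … ≥ λ_n`.
Then `λ_k > 0` and `|λ_n| ≤ (n-k)·λ_k`, strictly if `λ_n < 0`. -/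
theorem stmt0 (n k : ℕ) (hk1 : 1 ≤ k) (hkn : k < n)
    (lam : Fin n → ℝ) (hGamma : lam ∈ GardingCone n k)
    (hsort : ∀ i j : Fin n, i ≤ j → lam j ≤ lam i) :
    0 < lam ⟨k - 1, by omega⟩ ∧
    |lam ⟨n - 1, by omega⟩| ≤ ((n : ℝ) - (k : ℝ)) * lam ⟨k - 1, by omega⟩ ∧
    (lam ⟨n - 1, by omega⟩ < 0 →
      |lam ⟨n - 1, by omega⟩| < ((n : ℝ) - (k : ℝ)) * lam ⟨k - 1, by omega⟩) := by
  obtain ⟨j, rfl⟩ : ∃ j, k = j + 1 := ⟨k - 1, by omega⟩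
  simp only [Nat.add_sub_cancel]
  have hlam : Antitone lam := hsort
  have hΓ := mem_GardingCone_iff.mp hGamma
  have hpos := apply_pos_of_inGardingCone hlam (by omega) hΓ
  have hneg := neg_apply_last_lt hlam hkn hΓ
  have hle : lam ⟨n - 1, by omega⟩ ≤ lam ⟨j, by omega⟩ :=
    hlam (Fin.le_def.mpr (by simp; omega))
  have hnk : (1 : ℝ) ≤ n - (j + 1 : ℕ) := by
    have : ((j + 1 : ℕ) : ℝ) + 1 ≤ n := by exact_mod_cast hkn
    linarith
  exact ⟨hpos, abs_le.mpr ⟨by linarith, hle.trans (le_mul_of_one_le_left hpos.le hnk)⟩,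
    fun hlt => by rw [abs_of_neg hlt]; exact hneg⟩
end

section
/- Let 2 ≤ k ≤ n and A > 0. Then there exist constants c > 0 depending only on n and k, and C > 0 depending only on n, k and A, such that for every λ = (λ_1, …, λ_n) ∈ Γ_k with λ_1 ≥ … ≥ λ_n and λ_n > −A, one has λ_k ≤ c·σ_k(λ)^{1/k} + C. -/
/-
If `λ_k ≤ 2 C(n,k) A` there is nothing to prove. Otherwise `λ_k ≥ A > -λ_n`, so in every
`k`-subset the `i`-th largest selected entry has absolute value at most `λ_i`, and only the
smallest one can be negative, in which case it lies in `(-A, 0)`. Every term of `σ_k` is therefore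
at least `-A λ_1 ⋯ λ_{k-1}`, while the top term is `λ_1 ⋯ λ_k`, whence
`σ_k ≥ λ_1 ⋯ λ_{k-1} (λ_k - C(n,k) A) ≥ λ_1 ⋯ λ_k / 2 ≥ λ_k^k / 2`.
-/

lemma Fin.val_le_val_of_strictMono {m n : ℕ} {e : Fin m → Fin n} (he : StrictMono e) (i : Fin m) :
    (i : ℕ) ≤ e i := by
  obtain ⟨i, hi⟩ := i
  induction i with
  | zero => exact Nat.zero_le _
  | succ j ih =>
    have hstep : e ⟨j, by omega⟩ < e ⟨j + 1, hi⟩ := he (Fin.mk_lt_mk.mpr j.lt_succ_self)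
    have := ih (by omega)
    rw [Fin.lt_def] at hstep
    dsimp only at this hstep ⊢
    omega

theorem Real.le_mul_rpow_one_div_of_pow_le {x y c : ℝ} {m : ℕ} (hx : 0 ≤ x) (hy : 0 ≤ y)
    (hc : 1 ≤ c) (hm : m ≠ 0) (h : x ^ m ≤ c * y) : x ≤ c * y ^ ((1 : ℝ) / (m : ℝ)) := by
  have hm' : (1 : ℝ) / m ≤ 1 :=
    div_le_one_of_le₀ (Nat.one_le_cast.mpr (Nat.one_le_iff_ne_zero.mpr hm)) (by positivity)
  calc x = (x ^ m) ^ ((1 : ℝ) / m) := by rw [one_div, Real.pow_rpow_inv_natCast hx hm]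
    _ ≤ (c * y) ^ ((1 : ℝ) / m) := by gcongr
    _ = c ^ ((1 : ℝ) / m) * y ^ ((1 : ℝ) / m) := Real.mul_rpow (by linarith) hy
    _ ≤ c * y ^ ((1 : ℝ) / m) := by
      gcongr
      exact Real.rpow_le_self_of_one_le hc hm'

section TopEntries

variable {n k : ℕ} {lam : Fin n → ℝ} {A : ℝ}

lemma le_apply_castLE (hlam : Antitone lam) (hk : k < n) (m : Fin k) :
    lam ⟨k, hk⟩ ≤ lam (Fin.castLE hk.le m) :=
  hlam (Fin.le_def.mpr (Nat.le_of_lt m.2))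

lemma pow_le_prod_castLE (hlam : Antitone lam) (hk : k < n) (h0 : 0 ≤ lam ⟨k, hk⟩) :
    lam ⟨k, hk⟩ ^ k ≤ ∏ m : Fin k, lam (Fin.castLE hk.le m) := by
  simpa using Finset.prod_le_prod (s := Finset.univ) (fun _ _ => h0) fun m _ =>
    le_apply_castLE hlam hk m

lemma prod_castLE_nonneg (hlam : Antitone lam) (hk : k < n) (h0 : 0 ≤ lam ⟨k, hk⟩) :
    0 ≤ ∏ m : Fin k, lam (Fin.castLE hk.le m) :=
  (pow_nonneg h0 k).trans (pow_le_prod_castLE hlam hk h0)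

/- List `s` as `e 0 < ⋯ < e k`, so the entries `lam (e m)` decrease. For `m < k`, `lam k ≥ A ≥ -lam (e m)` and
`e m ≥ m` give `|lam (e m)| ≤ lam m`; the smallest entry `lam (e k)` is either nonnegative,
and then so is the whole product, or lies in `[-A, 0)`. -/
lemma neg_mul_prod_castLE_le_prod (hlam : Antitone lam) (hA : 0 ≤ A) (hlow : ∀ i, -A ≤ lam i)
    (hk : k < n) (hAk : A ≤ lam ⟨k, hk⟩) {s : Finset (Fin n)} (hs : s.card = k + 1) :
    -(A * ∏ m : Fin k, lam (Fin.castLE hk.le m)) ≤ ∏ i ∈ s, lam i := by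
  set e := s.orderEmbOfFin hs
  have hP := prod_castLE_nonneg hlam hk (hA.trans hAk)
  have hhead : ∀ m : Fin k, |lam (e m.castSucc)| ≤ lam (Fin.castLE hk.le m) := by
    intro m
    refine abs_le.mpr ⟨?_, hlam (Fin.le_def.mpr ?_)⟩
    · linarith [hlow (e m.castSucc), le_apply_castLE hlam hk m]
    · simpa using Fin.val_le_val_of_strictMono e.strictMono m.castSucc
  rw [← Finset.map_orderEmbOfFin_univ s hs, Finset.prod_map, Fin.prod_univ_castSucc]
  simp only [RelEmbedding.coe_toEmbedding]
  rcases le_or_gt 0 (lam (e (Fin.last k))) with hlast | hlast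
  · have : 0 ≤ ∏ m : Fin k, lam (e m.castSucc) :=
      Finset.prod_nonneg fun m _ => hlast.trans (hlam (e.monotone (Fin.le_last _)))
    nlinarith
  · have hbound : |(∏ m : Fin k, lam (e m.castSucc)) * lam (e (Fin.last k))|
        ≤ (∏ m : Fin k, lam (Fin.castLE hk.le m)) * A := by
      rw [abs_mul, Finset.abs_prod]
      exact mul_le_mul (Finset.prod_le_prod (fun m _ => abs_nonneg _) fun m _ => hhead m)
        (abs_le.mpr ⟨hlow _, by linarith⟩) (abs_nonneg _) hP
    linarith [neg_abs_le ((∏ m : Fin k, lam (e m.castSucc)) * lam (e (Fin.last k)))]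

lemma prod_castLE_mul_le_esymm (hlam : Antitone lam) (hA : 0 ≤ A) (hlow : ∀ i, -A ≤ lam i)
    (hk : k < n) (hAk : A ≤ lam ⟨k, hk⟩) :
    (∏ m : Fin k, lam (Fin.castLE hk.le m)) * (lam ⟨k, hk⟩ - n.choose (k + 1) * A)
      ≤ esymm n (k + 1) lam := by
  set P := ∏ m : Fin k, lam (Fin.castLE hk.le m)
  set T : Finset (Fin n) := Finset.univ.map (Fin.castLEEmb hk)
  have hT : T ∈ (Finset.univ : Finset (Fin n)).powersetCard (k + 1) := by simp [T]
  have hPT : ∏ i ∈ T, lam i = P * lam ⟨k, hk⟩ := by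
    simp only [T, Finset.prod_map, Fin.prod_univ_castSucc]
    rfl
  have hrest : -(n.choose (k + 1) * (A * P)) ≤
      ∑ s ∈ ((Finset.univ : Finset (Fin n)).powersetCard (k + 1)).erase T, ∏ i ∈ s, lam i := by
    have hcard : ((((Finset.univ : Finset (Fin n)).powersetCard (k + 1)).erase T).card : ℝ)
        ≤ n.choose (k + 1) := by
      exact_mod_cast (Finset.card_erase_le).trans_eq (by simp)
    have hsum := Finset.card_nsmul_le_sum
      (((Finset.univ : Finset (Fin n)).powersetCard (k + 1)).erase T)
      (fun s => ∏ i ∈ s, lam i) (-(A * P)) fun s hs => neg_mul_prod_castLE_le_prod hlam hA hlow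
        hk hAk (Finset.mem_powersetCard.mp (Finset.mem_of_mem_erase hs)).2
    rw [nsmul_eq_mul] at hsum
    nlinarith [mul_nonneg hA (prod_castLE_nonneg hlam hk (hA.trans hAk))]
  rw [esymm, ← Finset.add_sum_erase _ _ hT, hPT]
  linarith

lemma le_two_mul_esymm_rpow_add (hlam : Antitone lam) (hA : 0 ≤ A) (hlow : ∀ i, -A ≤ lam i)
    (hk : k < n) (hσ : 0 ≤ esymm n (k + 1) lam) :
    lam ⟨k, hk⟩ ≤
      2 * esymm n (k + 1) lam ^ ((1 : ℝ) / ((k + 1 : ℕ) : ℝ)) + 2 * n.choose (k + 1) * A := by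
  set L := lam ⟨k, hk⟩
  set N : ℝ := ((n.choose (k + 1) : ℕ) : ℝ)
  have hroot : 0 ≤ esymm n (k + 1) lam ^ ((1 : ℝ) / ((k + 1 : ℕ) : ℝ)) := Real.rpow_nonneg hσ _
  rcases le_or_gt L (2 * N * A) with hsmall | hlarge
  · linarith
  have hN : 1 ≤ N := Nat.one_le_cast.mpr (Nat.choose_pos hk)
  have hAL : A ≤ L := by nlinarith
  have hL0 : 0 ≤ L := hA.trans hAL
  set P := ∏ m : Fin k, lam (Fin.castLE hk.le m)
  have hLP : L ^ k ≤ P := pow_le_prod_castLE hlam hk hL0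
  have hpow : L ^ (k + 1) ≤ 2 * esymm n (k + 1) lam := calc
    L ^ (k + 1) = L ^ k * L := pow_succ L k
    _ ≤ P * L := mul_le_mul_of_nonneg_right hLP hL0
    _ ≤ 2 * (P * (L - N * A)) := by nlinarith [prod_castLE_nonneg hlam hk hL0]
    _ ≤ 2 * esymm n (k + 1) lam := by
      linarith [prod_castLE_mul_le_esymm hlam hA hlow hk hAL]
  have hNA : 0 ≤ N * A := by positivity
  linarith [Real.le_mul_rpow_one_div_of_pow_le hL0 hσ one_le_two k.succ_ne_zero hpow]

end TopEntries

/-- For `2 ≤ k ≤ n` there is `c > 0` (depending only on `n, k`)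
such that for every `A > 0` there is `C > 0` (depending only on `n, k, A`) with:
every decreasing `λ ∈ Γ_k` with `λ_n > -A` satisfies `λ_k ≤ c·σ_k(λ)^{1/k} + C`. -/
theorem stmt2 (n k : ℕ) (hk : 2 ≤ k) (hkn : k ≤ n) :
    ∃ c : ℝ, 0 < c ∧ ∀ A : ℝ, 0 < A →
      ∃ C : ℝ, 0 < C ∧ ∀ lam : Fin n → ℝ,
        lam ∈ GardingCone n k →
        (∀ i j : Fin n, i ≤ j → lam j ≤ lam i) →
        -A < lam ⟨n - 1, by omega⟩ →
        lam ⟨k - 1, by omega⟩ ≤ c * (esymm n k lam) ^ ((1 : ℝ) / (k : ℝ)) + C := by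
  obtain ⟨k, rfl⟩ : ∃ k', k = k' + 1 := ⟨k - 1, by omega⟩
  refine ⟨2, two_pos, fun A hA => ⟨2 * n.choose (k + 1) * A, ?_, fun lam hΓ hlam hlast => ?_⟩⟩
  · have : 0 < n.choose (k + 1) := Nat.choose_pos hkn
    positivity
  have hlow : ∀ i, -A ≤ lam i := fun i =>
    hlast.le.trans (hlam i _ (Fin.le_def.mpr (by dsimp only; omega)))
  exact le_two_mul_esymm_rpow_add hlam hA.le hlow hkn
    (hΓ (k + 1) le_add_self le_rfl).le
end

section
/- Let 1 ≤ s < k ≤ n and let λ = (λ_1, …, λ_n) ∈ Γ_k with λ_1 ≥ λ_2 ≥ … ≥ λ_n. Then σ_s(λ) > λ_1 · λ_2 ⋯ λ_s. -/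
open Polynomial

namespace Stmt4

lemma mesymm_zero (s : Multiset ℝ) : s.esymm 0 = 1 := by
  simp [Multiset.esymm]

lemma mesymm_cons (a : ℝ) (s : Multiset ℝ) (j : ℕ) :
    (a ::ₘ s).esymm (j + 1) = s.esymm (j + 1) + a * s.esymm j := by
  simp [Multiset.esymm, Multiset.powersetCard_cons, Multiset.map_map, Function.comp,
    Multiset.sum_map_mul_left]

lemma mesymm_eq_zero {s : Multiset ℝ} {j : ℕ} (h : Multiset.card s < j) : s.esymm j = 0 := by
  simp [Multiset.esymm, Multiset.powersetCard_eq_empty _ h]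

lemma mesymm_one (s : Multiset ℝ) : s.esymm 1 = s.sum := by
  simp [Multiset.esymm, Multiset.powersetCard_one, Multiset.map_map, Function.comp]

lemma topNewton : ∀ (s : Multiset ℝ) (d : ℕ), Multiset.card s ≤ d + 2 →
    2 * s.esymm (d + 2) * s.esymm d ≤ s.esymm (d + 1) ^ 2 := by
  intro s
  induction s using Multiset.induction with
  | empty =>
    intro d _
    rw [mesymm_eq_zero (by simp)]
    nlinarith [sq_nonneg ((0 : Multiset ℝ).esymm (d + 1))]
  | cons a t ih =>
    intro d hcard
    rw [Multiset.card_cons] at hcard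
    rcases lt_or_eq_of_le (Nat.lt_succ_iff.mp (Nat.lt_succ_of_le hcard)) with hlt | heq
    · -- card t ≤ d, hence card (a ::ₘ t) < d + 2
      have h2 : (a ::ₘ t).esymm (d + 2) = 0 :=
        mesymm_eq_zero (by rw [Multiset.card_cons]; omega)
      rw [h2]
      nlinarith [sq_nonneg ((a ::ₘ t).esymm (d + 1))]
    · -- card t = d + 1
      have hteq : Multiset.card t = d + 1 := by omega
      have ht2 : t.esymm (d + 2) = 0 := mesymm_eq_zero (by omega)
      rcases d with _ | d'
      · -- d = 0, card t = 1
        have ht22 : t.esymm 2 = 0 := ht2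
        have e2 : (a ::ₘ t).esymm (0 + 2) = a * t.esymm 1 := by
          rw [show (0:ℕ) + 2 = 1 + 1 from rfl, mesymm_cons, ht22]; ring
        have e1 : (a ::ₘ t).esymm (0 + 1) = t.esymm 1 + a := by
          rw [mesymm_cons, mesymm_zero]; ring
        have e0 : (a ::ₘ t).esymm 0 = 1 := mesymm_zero _
        rw [e2, e1, e0]
        nlinarith [sq_nonneg (t.esymm 1), sq_nonneg a]
      · have hIH := ih d' (by omega)
        rw [show d' + 1 + 2 = (d' + 2) + 1 from rfl, mesymm_cons, mesymm_cons,
          show d' + 1 + 1 = d' + 2 from rfl, mesymm_cons, ht2]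
        nlinarith [hIH, sq_nonneg (t.esymm (d' + 2)), sq_nonneg a,
          mul_nonneg (sq_nonneg a) (sub_nonneg.mpr hIH)]


/-- A real polynomial is "real-rooted" if it has as many real roots (with multiplicity)
as its degree. -/
def RR (p : ℝ[X]) : Prop := Multiset.card p.roots = p.natDegree

lemma rr_zero : RR (0 : ℝ[X]) := by simp [RR]

lemma rr_derivative {p : ℝ[X]} (h : RR p) : RR (derivative p) := by
  by_cases hd : derivative p = 0
  · rw [hd]; exact rr_zero
  · have h1 : (derivative p).natDegree ≤ p.natDegree - 1 := natDegree_derivative_le p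
    have h2 : Multiset.card (derivative p).roots ≤ (derivative p).natDegree :=
      card_roots' _
    have h3 : Multiset.card p.roots ≤ Multiset.card (derivative p).roots + 1 :=
      card_roots_le_derivative p
    have hp1 : 1 ≤ p.natDegree := by
      by_contra hc
      push_neg at hc
      have : p = C (p.coeff 0) := eq_C_of_natDegree_le_zero (by omega)
      exact hd (by rw [this, derivative_C])
    unfold RR at h ⊢
    omega

lemma rr_iterate {p : ℝ[X]} (h : RR p) (k : ℕ) : RR (derivative^[k] p) := by
  induction k with
  | zero => simpa
  | succ k ih => rw [Function.iterate_succ_apply']; exact rr_derivative ih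

/-- The polynomial `∏ (1 + a X)` over a multiset. -/
noncomputable def QQ (s : Multiset ℝ) : ℝ[X] := (s.map (fun a => C a * X + 1)).prod

lemma QQ_cons (a : ℝ) (s : Multiset ℝ) : QQ (a ::ₘ s) = (C a * X + 1) * QQ s := by
  simp [QQ]

lemma QQ_ne_zero (s : Multiset ℝ) : QQ s ≠ 0 := by
  induction s using Multiset.induction with
  | empty => simp [QQ]
  | cons a t ih =>
    rw [QQ_cons]
    refine mul_ne_zero ?_ ih
    intro hc
    have := congrArg (fun q => Polynomial.coeff q 0) hc
    simp at this

lemma coeff_QQ (s : Multiset ℝ) : ∀ j : ℕ, (QQ s).coeff j = s.esymm j := by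
  induction s using Multiset.induction with
  | empty =>
    intro j
    rcases j with _ | j
    · simp [QQ, mesymm_zero]
    · rw [mesymm_eq_zero (by simp)]
      simp [QQ, coeff_one]
  | cons a t ih =>
    intro j
    have hexp : QQ (a ::ₘ t) = C a * (X * QQ t) + QQ t := by rw [QQ_cons]; ring
    rcases j with _ | j
    · rw [hexp, mesymm_zero]
      rw [coeff_add, coeff_C_mul, mul_coeff_zero, coeff_X_zero, ih 0, mesymm_zero]
      ring
    · rw [hexp, mesymm_cons]
      rw [coeff_add, coeff_C_mul, coeff_X_mul, ih, ih]
      ring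

lemma rr_QQ (s : Multiset ℝ) : RR (QQ s) := by
  induction s using Multiset.induction with
  | empty => simp [RR, QQ]
  | cons a t ih =>
    rw [QQ_cons]
    have hfac : RR (C a * X + 1) := by
      by_cases ha : a = 0
      · simp [RR, ha]
      · have hrw : C a * X + 1 = C a * (X + C a⁻¹) := by
          rw [mul_add, ← C_mul, mul_inv_cancel₀ ha, C_1]
        rw [RR, hrw, roots_C_mul _ ha, natDegree_C_mul ha, natDegree_X_add_C]
        rw [show X + C a⁻¹ = X - C (-a⁻¹) by rw [map_neg, sub_neg_eq_add], roots_X_sub_C]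
        rfl
    have hf0 : (C a * X + 1) ≠ 0 := by
      intro hc
      have := congrArg (fun q => Polynomial.coeff q 0) hc
      simp at this
    rw [RR, roots_mul (mul_ne_zero hf0 (QQ_ne_zero t)),
      natDegree_mul hf0 (QQ_ne_zero t), Multiset.card_add, hfac, ih]

lemma quad {p : ℝ[X]} (h : RR p) : 2 * p.coeff 0 * p.coeff 2 ≤ p.coeff 1 ^ 2 := by
  rcases le_or_gt p.natDegree 1 with hd | hd
  · have h2 : p.coeff 2 = 0 := coeff_eq_zero_of_natDegree_lt (by omega)
    rw [h2]
    nlinarith [sq_nonneg (p.coeff 1)]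
  · have hp0 : p ≠ 0 := by
      intro hc; rw [hc] at hd; simp at hd
    have hR := C_leadingCoeff_mul_prod_multiset_X_sub_C (p := p) h
    set u : Multiset ℝ := p.roots.map (fun a => -a) with hu
    have hcard : Multiset.card u = p.natDegree := by
      rw [hu, Multiset.card_map]; exact h
    have hprod : (p.roots.map fun a => X - C a).prod = (u.map fun a => X + C a).prod := by
      rw [hu, Multiset.map_map]
      congr 1
      apply Multiset.map_congr rfl
      intro x _
      simp [sub_eq_add_neg]
    have hcoeff : ∀ j, j ≤ p.natDegree →
        p.coeff j = p.leadingCoeff * u.esymm (p.natDegree - j) := by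
      intro j hj
      conv_lhs => rw [← hR]
      rw [hprod, coeff_C_mul, Multiset.prod_X_add_C_coeff u (by omega), hcard]
    obtain ⟨d', hd'⟩ : ∃ d', p.natDegree = d' + 2 := ⟨p.natDegree - 2, by omega⟩
    have h0 := hcoeff 0 (by omega)
    have h1 := hcoeff 1 (by omega)
    have h2 := hcoeff 2 (by omega)
    rw [h0, h1, h2, hd']
    have hsub0 : d' + 2 - 0 = d' + 2 := by omega
    have hsub1 : d' + 2 - 1 = d' + 1 := by omega
    have hsub2 : d' + 2 - 2 = d' := by omega
    rw [hsub0, hsub1, hsub2]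
    have htop := topNewton u d' (by omega)
    nlinarith [htop, sq_nonneg p.leadingCoeff,
      mul_le_mul_of_nonneg_left htop (sq_nonneg p.leadingCoeff)]

lemma descFac1 : ∀ m : ℕ, (m + 1).descFactorial m = (m + 1) * m.descFactorial m := by
  intro m
  induction m with
  | zero => rfl
  | succ m ih =>
    rw [Nat.succ_descFactorial_succ, ih, Nat.succ_descFactorial_succ]

lemma descFac2 : ∀ m : ℕ, 2 * (m + 2).descFactorial m = (m + 2) * (m + 1).descFactorial m := by
  intro m
  induction m with
  | zero => rfl
  | succ m ih =>
    rw [Nat.succ_descFactorial_succ, show m + 1 + 2 = (m + 2) + 1 from rfl,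
      Nat.succ_descFactorial_succ, ← mul_assoc, mul_comm 2 (m + 2 + 1), mul_assoc, ih]

lemma newton_weak (s : Multiset ℝ) (m : ℕ) :
    ((m : ℝ) + 2) * s.esymm (m + 2) * s.esymm m ≤ ((m : ℝ) + 1) * s.esymm (m + 1) ^ 2 := by
  have hrr : RR (derivative^[m] (QQ s)) := rr_iterate (rr_QQ s) m
  have hq := quad hrr
  rw [coeff_iterate_derivative, coeff_iterate_derivative, coeff_iterate_derivative,
    coeff_QQ, coeff_QQ, coeff_QQ] at hq
  simp only [Nat.zero_add, nsmul_eq_mul] at hq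
  -- hq : 2 * (F1 * e m) * (F3 * e (m+2)) ≤ (F2 * e (m+1))^2  (after index normalization)
  have hA : (1 : ℕ) + m = m + 1 := by omega
  have hB : (2 : ℕ) + m = m + 2 := by omega
  rw [hA, hB] at hq
  set F1 : ℝ := ((m.descFactorial m : ℕ) : ℝ) with hF1
  set F2 : ℝ := (((m + 1).descFactorial m : ℕ) : ℝ) with hF2
  set F3 : ℝ := (((m + 2).descFactorial m : ℕ) : ℝ) with hF3
  have hF1pos : 0 < F1 := by
    rw [hF1]
    rw [Nat.descFactorial_self]
    exact_mod_cast Nat.factorial_pos m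
  have e2 : F2 = ((m : ℝ) + 1) * F1 := by
    rw [hF2, hF1, descFac1 m]
    push_cast; ring
  have e3 : 2 * F3 = ((m : ℝ) + 2) * F2 := by
    rw [hF3, hF2, ← Nat.cast_ofNat, ← Nat.cast_mul, descFac2 m]
    push_cast; ring
  have hF3v : F3 = ((m : ℝ) + 2) * ((m : ℝ) + 1) * F1 / 2 := by
    rw [e2] at e3; linarith
  rw [e2, hF3v] at hq
  have hkey : 0 < ((m : ℝ) + 1) * F1 ^ 2 := by positivity
  nlinarith [hq, hkey, mul_pos hkey hkey]


lemma bridge (n j : ℕ) (lam : Fin n → ℝ) :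
    esymm n j lam = ((Finset.univ : Finset (Fin n)).val.map lam).esymm j := by
  rw [Finset.esymm_map_val]
  rfl

lemma MS_succ (n : ℕ) (lam : Fin (n + 1) → ℝ) :
    ((Finset.univ : Finset (Fin (n + 1))).val.map lam)
      = lam 0 ::ₘ ((Finset.univ : Finset (Fin n)).val.map (fun i : Fin n => lam i.succ)) := by
  rw [Fin.univ_succ, Finset.cons_val, Multiset.map_cons, Finset.map_val, Multiset.map_map]
  rfl

lemma fin_esymm_zero (n : ℕ) (lam : Fin n → ℝ) : esymm n 0 lam = 1 := by
  simp [esymm]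

lemma fin_esymm_succ (n j : ℕ) (lam : Fin (n + 1) → ℝ) :
    esymm (n + 1) (j + 1) lam
      = esymm n (j + 1) (fun i => lam i.succ) + lam 0 * esymm n j (fun i => lam i.succ) := by
  rw [bridge, bridge, bridge, MS_succ, mesymm_cons]

lemma head_pos (n k : ℕ) (hk : 1 ≤ k) (lam : Fin (n + 1) → ℝ)
    (hG : lam ∈ GardingCone (n + 1) k)
    (hsort : ∀ i j : Fin (n + 1), i ≤ j → lam j ≤ lam i) : 0 < lam 0 := by
  have h1 : 0 < esymm (n + 1) 1 lam := hG 1 le_rfl hk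
  rw [bridge, mesymm_one] at h1
  have hle : ((Finset.univ : Finset (Fin (n + 1))).val.map lam).sum
      ≤ (Multiset.card ((Finset.univ : Finset (Fin (n + 1))).val.map lam)) • lam 0 := by
    apply Multiset.sum_le_card_nsmul
    intro x hx
    obtain ⟨i, _, rfl⟩ := Multiset.mem_map.mp hx
    exact hsort 0 i (Fin.zero_le i)
  have hcard : Multiset.card ((Finset.univ : Finset (Fin (n + 1))).val.map lam) = n + 1 := by
    simp
  rw [hcard, nsmul_eq_mul] at hle
  by_contra hc
  push_neg at hc
  have : ((n : ℝ) + 1) * lam 0 ≤ 0 :=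
    mul_nonpos_of_nonneg_of_nonpos (by positivity) hc
  push_cast at hle
  linarith

lemma tail_cone (n k : ℕ) (hk : 1 ≤ k) (lam : Fin (n + 1) → ℝ)
    (hG : lam ∈ GardingCone (n + 1) k)
    (hsort : ∀ i j : Fin (n + 1), i ≤ j → lam j ≤ lam i) :
    (fun i : Fin n => lam i.succ) ∈ GardingCone n (k - 1) := by
  set ν : Fin n → ℝ := fun i : Fin n => lam i.succ with hν
  have ha : 0 < lam 0 := head_pos n k hk lam hG hsort
  have key : ∀ j, j ≤ k - 1 → 0 < esymm n j ν := by
    intro j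
    induction j with
    | zero =>
      intro _
      rw [fin_esymm_zero]
      norm_num
    | succ j ihj =>
      intro hj
      have hej : 0 < esymm n j ν := ihj (by omega)
      have h1 : 0 < esymm (n + 1) (j + 1) lam := hG (j + 1) (by omega) (by omega)
      have h2 : 0 < esymm (n + 1) (j + 2) lam := hG (j + 2) (by omega) (by omega)
      rw [fin_esymm_succ] at h1
      rw [show j + 2 = (j + 1) + 1 from rfl, fin_esymm_succ] at h2
      have hN := newton_weak ((Finset.univ : Finset (Fin n)).val.map ν) j
      rw [← bridge, ← bridge, ← bridge] at hN
      rw [← hν] at h1 h2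
      by_contra hx
      push_neg at hx
      have hA : 0 < ((j : ℝ) + 2) * ((esymm n (j + 2) ν + lam 0 * esymm n (j + 1) ν) * esymm n j ν) :=
        mul_pos (by positivity) (mul_pos h2 hej)
      have hB : 0 ≤ ((j : ℝ) + 2) * ((-esymm n (j + 1) ν)
          * (esymm n (j + 1) ν + lam 0 * esymm n j ν)) :=
        mul_nonneg (by positivity) (mul_nonneg (neg_nonneg.mpr hx) h1.le)
      nlinarith [hA, hB, hN, sq_nonneg (esymm n (j + 1) ν)]
  intro j hj1 hj2
  exact key j (by omega)
lemma prod_head (n s : ℕ) (lam : Fin (n + 1) → ℝ) :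
    (∏ i ∈ Finset.univ.filter (fun i : Fin (n + 1) => (i : ℕ) < s + 1), lam i)
      = lam 0 * ∏ i ∈ Finset.univ.filter (fun i : Fin n => (i : ℕ) < s), lam i.succ := by
  rw [Finset.prod_filter, Finset.prod_filter, Fin.prod_univ_succ]
  have h0 : ((0 : Fin (n + 1)) : ℕ) < s + 1 := Nat.succ_pos s
  rw [if_pos h0]
  congr 1
  apply Finset.prod_congr rfl
  intro i _
  have hiff : ((i.succ : Fin (n + 1)) : ℕ) < s + 1 ↔ (i : ℕ) < s := by
    rw [Fin.val_succ]
    omega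
  by_cases hc : (i : ℕ) < s
  · rw [if_pos (hiff.mpr hc), if_pos hc]
  · rw [if_neg (fun h => hc (hiff.mp h)), if_neg hc]

lemma main_ind : ∀ s n k : ℕ, 1 ≤ s → s < k → k ≤ n → ∀ lam : Fin n → ℝ,
    lam ∈ GardingCone n k → (∀ i j : Fin n, i ≤ j → lam j ≤ lam i) →
    (∏ i ∈ Finset.univ.filter (fun i : Fin n => (i : ℕ) < s), lam i) < esymm n s lam := by
  intro s
  induction s with
  | zero => intro n k hs; omega
  | succ s ih =>
    intro n k hs hsk hkn lam hG hsort
    obtain ⟨n', rfl⟩ : ∃ n', n = n' + 1 := ⟨n - 1, by omega⟩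
    set ν : Fin n' → ℝ := fun i : Fin n' => lam i.succ with hν
    have hsort' : ∀ i j : Fin n', i ≤ j → ν j ≤ ν i := by
      intro i j hij
      exact hsort i.succ j.succ (by simpa using hij)
    have ha : 0 < lam 0 := head_pos n' k (by omega) lam hG hsort
    have hGt : ν ∈ GardingCone n' (k - 1) := tail_cone n' k (by omega) lam hG hsort
    have hνs1 : 0 < esymm n' (s + 1) ν := hGt (s + 1) (by omega) (by omega)
    rw [prod_head, fin_esymm_succ, ← hν]
    rcases Nat.eq_zero_or_pos s with hs0 | hs1
    · subst hs0
      have hempty : (Finset.univ.filter (fun i : Fin n' => (i : ℕ) < 0)) = ∅ := by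
        apply Finset.filter_false_of_mem
        intro i _
        omega
      rw [hempty, Finset.prod_empty, fin_esymm_zero]
      linarith
    · have hIH := ih n' (k - 1) hs1 (by omega) (by omega) ν hGt hsort'
      have hνs : 0 < esymm n' s ν := hGt s (by omega) (by omega)
      have hmul : lam 0 * (∏ i ∈ Finset.univ.filter (fun i : Fin n' => (i : ℕ) < s), ν i)
          < lam 0 * esymm n' s ν := by
        exact mul_lt_mul_of_pos_left hIH ha
      calc lam 0 * (∏ i ∈ Finset.univ.filter (fun i : Fin n' => (i : ℕ) < s), ν i)
          < lam 0 * esymm n' s ν := hmul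
        _ ≤ esymm n' (s + 1) ν + lam 0 * esymm n' s ν := by linarith

end Stmt4

/-- Let `1 ≤ s < k ≤ n` and let `λ ∈ Γ_k` be decreasing.
Then `σ_s(λ) > λ_1·λ_2⋯λ_s`. -/
theorem stmt4 (n k s : ℕ) (hs : 1 ≤ s) (hsk : s < k) (hkn : k ≤ n)
    (lam : Fin n → ℝ) (hGamma : lam ∈ GardingCone n k)
    (hsort : ∀ i j : Fin n, i ≤ j → lam j ≤ lam i) :
    (∏ i ∈ Finset.univ.filter (fun i : Fin n => (i : ℕ) < s), lam i) < esymm n s lam :=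
  Stmt4.main_ind s n k hs hsk hkn lam hGamma hsort
end

section
/- Let 2 ≤ k ≤ n − 1, let A > 0 and 0 < m ≤ M, and set c_0 = 1/(2(k+2)² − 1). Then there exist constants Λ > 0 and C > 0, depending only on n, k, A, m, M, such that for every λ = (λ_1, …, λ_n) ∈ Γ_k with λ_1 ≥ … ≥ λ_n, λ_n > −A, m ≤ σ_k(λ) ≤ M, λ_1 ≥ Λ, and σ_k(λ|1) < −c_0·σ_k(λ), one has λ_k ≤ C·|λ_n|. -/
/-- `σ_m(λ | S)`: the `m`-th elementary symmetric polynomial of the vector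
obtained from `λ` by deleting the entries with indices in `S`. -/
noncomputable def esymmR (n m : ℕ) (lam : Fin n → ℝ) (S : Finset (Fin n)) : ℝ :=
  ∑ s ∈ (Finset.univ \ S).powersetCard m, ∏ i ∈ s, lam i

open Finset

theorem Multiset.esymm_cons_succ_s11 {R : Type*} [CommSemiring R] (a : R) (s : Multiset R) (m : ℕ) :
    (a ::ₘ s).esymm (m + 1) = a * s.esymm m + s.esymm (m + 1) := by
  simp only [Multiset.esymm, Multiset.powersetCard_cons, Multiset.map_add, Multiset.sum_add,
    Multiset.map_map, Function.comp_def, Multiset.prod_cons, Multiset.sum_map_mul_left]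
  ring

theorem esymm_succ_succ {n m : ℕ} (lam : Fin (n + 1) → ℝ) :
    esymm (n + 1) (m + 1) lam =
      lam 0 * esymm n m (Fin.tail lam) + esymm n (m + 1) (Fin.tail lam) := by
  simp only [esymm, ← Finset.esymm_map_val, Fin.univ_succ, Finset.cons_val, Multiset.map_cons,
    Multiset.esymm_cons_succ_s11, Finset.map_val, Multiset.map_map]
  rfl

theorem esymmR_zero {n m : ℕ} (lam : Fin (n + 1) → ℝ) :
    esymmR (n + 1) m lam {0} = esymm n m (Fin.tail lam) := by
  have : (univ \ {0} : Finset (Fin (n + 1))) = univ.map (Fin.succEmb n) := by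
    ext i; cases i using Fin.cases <;> simp
  simp [esymmR, esymm, this, powersetCard_map, Fin.tail]

def initSeg (n l : ℕ) : Finset (Fin n) := univ.filter fun i => (i : ℕ) < l

theorem initSeg_succ {n l : ℕ} (hl : l < n) :
    initSeg n (l + 1) = cons ⟨l, hl⟩ (initSeg n l) (by simp [initSeg]) := by
  ext i; simp [initSeg, Fin.ext_iff]; omega

theorem card_initSeg {n l : ℕ} (hl : l ≤ n) : #(initSeg n l) = l := by
  induction l with
  | zero => simp [initSeg]
  | succ l ih => rw [initSeg_succ (by omega), card_cons, ih (by omega)]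

theorem prod_le_prod_initSeg {R : Type*} [CommSemiring R] [PartialOrder R] [IsOrderedRing R]
    {n : ℕ} {f : Fin n → R} (hf : Antitone f) (hf0 : ∀ i, 0 ≤ f i) (t : Finset (Fin n)) :
    ∏ i ∈ t, f i ≤ ∏ i ∈ initSeg n #t, f i := by
  induction t using Finset.induction_on_max with
  | empty => simp [initSeg]
  | insert a t hlt ih =>
    have hat : a ∉ t := fun h => lt_irrefl a (hlt a h)
    have hcard : #t ≤ a := by
      simpa using card_le_card (show t ⊆ Iio a from fun x hx => mem_Iio.2 (hlt x hx))
    rw [prod_insert hat, card_insert_of_notMem hat, initSeg_succ (hcard.trans_lt a.isLt),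
      prod_cons]
    exact mul_le_mul (hf (Fin.le_iff_val_le_val.2 hcard)) ih (prod_nonneg fun i _ => hf0 i)
      (hf0 _)

theorem neg_mul_le_prod {ι R : Type*} [DecidableEq ι] [CommRing R] [LinearOrder R]
    [IsStrictOrderedRing R] {s : Finset ι} {μ : ι → R} {δ B : R} (hδ : 0 ≤ δ) (hB : 0 ≤ B) (hμ : ∀ i ∈ s, -δ ≤ μ i)
    (hrest : ∀ a ∈ s, ∏ i ∈ s.erase a, |μ i| ≤ B) : -(δ * B) ≤ ∏ i ∈ s, μ i := by
  by_cases hpos : ∀ i ∈ s, 0 ≤ μ i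
  · linarith [prod_nonneg hpos, mul_nonneg hδ hB]
  push Not at hpos
  obtain ⟨a, ha, hneg⟩ := hpos
  have : |∏ i ∈ s, μ i| ≤ δ * B := by
    rw [abs_prod, ← mul_prod_erase s _ ha]
    exact mul_le_mul (abs_le.2 ⟨hμ a ha, by linarith⟩) (hrest a ha)
      (prod_nonneg fun i _ => abs_nonneg _) hδ
  linarith [neg_abs_le (∏ i ∈ s, μ i)]

section
variable {n : ℕ} {μ : Fin n → ℝ} {δ : ℝ}

theorem neg_le_prod_of_card_eq (hμ : Antitone μ) (hδ : 0 ≤ δ) (hμδ : ∀ i, -δ ≤ μ i)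
    {s : Finset (Fin n)} {l : ℕ} (hs : #s = l + 1) :
    -(δ * ∏ i ∈ initSeg n l, max (μ i) δ) ≤ ∏ i ∈ s, μ i := by
  refine neg_mul_le_prod hδ (prod_nonneg fun i _ => hδ.trans (le_max_right _ _))
    (fun i _ => hμδ i) fun a ha => ?_
  calc ∏ i ∈ s.erase a, |μ i| ≤ ∏ i ∈ s.erase a, max (μ i) δ :=
        prod_le_prod (fun _ _ => abs_nonneg _) fun i _ =>
          abs_le'.2 ⟨le_max_left _ _, (neg_le.1 (hμδ i)).trans (le_max_right _ _)⟩
    _ ≤ ∏ i ∈ initSeg n #(s.erase a), max (μ i) δ :=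
        prod_le_prod_initSeg (fun i j h => max_le_max (hμ h) le_rfl)
          (fun i => hδ.trans (le_max_right _ _)) _
    _ = ∏ i ∈ initSeg n l, max (μ i) δ := by rw [card_erase_of_mem ha, hs, Nat.add_sub_cancel]

theorem neg_choose_mul_le_esymm (hμ : Antitone μ) (hδ : 0 ≤ δ) (hμδ : ∀ i, -δ ≤ μ i) (l : ℕ) :
    -(n.choose (l + 1) * (δ * ∏ i ∈ initSeg n l, max (μ i) δ)) ≤ esymm n (l + 1) μ := by
  have := card_nsmul_le_sum (univ.powersetCard (l + 1)) (fun s => ∏ i ∈ s, μ i) _ fun s hs =>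
    neg_le_prod_of_card_eq hμ hδ hμδ (mem_powersetCard.1 hs).2
  simpa [esymm, nsmul_eq_mul, card_powersetCard] using this

theorem prod_sub_choose_mul_le_esymm (hμ : Antitone μ) (hδ : 0 ≤ δ) (hμδ : ∀ i, -δ ≤ μ i)
    {l : ℕ} {s₀ : Finset (Fin n)} (hs₀ : #s₀ = l + 1) :
    ∏ i ∈ s₀, μ i - n.choose (l + 1) * (δ * ∏ i ∈ initSeg n l, max (μ i) δ)
      ≤ esymm n (l + 1) μ := by
  set P := ∏ i ∈ initSeg n l, max (μ i) δ
  have hP : 0 ≤ δ * P := mul_nonneg hδ (prod_nonneg fun i _ => hδ.trans (le_max_right _ _))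
  have hmem : s₀ ∈ univ.powersetCard (l + 1) := mem_powersetCard.2 ⟨subset_univ _, hs₀⟩
  have hrest := card_nsmul_le_sum ((univ.powersetCard (l + 1)).erase s₀)
    (fun s => ∏ i ∈ s, μ i) _ fun s hs =>
    neg_le_prod_of_card_eq hμ hδ hμδ (mem_powersetCard.1 (mem_of_mem_erase hs)).2
  have hcard : (#((univ.powersetCard (l + 1)).erase s₀) : ℝ) ≤ n.choose (l + 1) := by
    exact_mod_cast (card_erase_le).trans (by simp)
  rw [esymm, ← add_sum_erase _ _ hmem]
  rw [nsmul_eq_mul] at hrest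
  linarith [mul_le_mul_of_nonneg_right hcard hP]

theorem exists_esymm_bounds_of_mul_lt (hμ : Antitone μ) (hδ : 0 ≤ δ) (hμδ : ∀ i, -δ ≤ μ i) {p : ℕ}
    (hp : p < n) (hlt : 2 * (n.choose (p + 1) + 1) * δ < μ ⟨p, hp⟩) :
    ∃ G, 0 < G ∧ -(n.choose (p + 2) * (δ * G)) ≤ esymm n (p + 2) μ ∧
      G / 2 ≤ esymm n (p + 1) μ := by
  have hμp : 0 < μ ⟨p, hp⟩ := lt_of_le_of_lt (by positivity) hlt
  have hδp : δ ≤ μ ⟨p, hp⟩ := by nlinarith [(n.choose (p + 1)).cast_nonneg (α := ℝ)]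
  have hhead : ∀ i ∈ initSeg n (p + 1), μ ⟨p, hp⟩ ≤ μ i := fun i hi =>
    hμ (Fin.le_iff_val_le_val.2 (Nat.lt_succ_iff.1 (by simpa [initSeg] using hi)))
  have hmax : ∀ i ∈ initSeg n (p + 1), max (μ i) δ = μ i := fun i hi =>
    max_eq_left (hδp.trans (hhead i hi))
  set P := ∏ i ∈ initSeg n p, μ i
  have hP : 0 ≤ P := prod_nonneg fun i hi =>
    hμp.le.trans (hhead i (by rw [initSeg_succ hp]; exact mem_cons_of_mem hi))
  have hG : ∏ i ∈ initSeg n (p + 1), μ i = μ ⟨p, hp⟩ * P := by rw [initSeg_succ hp, prod_cons]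
  refine ⟨μ ⟨p, hp⟩ * P, (prod_pos fun i hi => hμp.trans_le (hhead i hi)).trans_eq hG, ?_, ?_⟩
  · have := neg_choose_mul_le_esymm hμ hδ hμδ (p + 1)
    rwa [prod_congr rfl hmax, hG] at this
  · have := prod_sub_choose_mul_le_esymm hμ hδ hμδ (card_initSeg (show p + 1 ≤ n by omega))
    rw [prod_congr rfl fun i hi => hmax i (by rw [initSeg_succ hp]; exact mem_cons_of_mem hi),
      hG] at this
    linarith [mul_le_mul_of_nonneg_right hlt.le hP, mul_nonneg hδ hP]

theorem le_mul_of_esymm_lt_neg (hμ : Antitone μ) (hδ : 0 ≤ δ) (hμδ : ∀ i, -δ ≤ μ i) {p : ℕ}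
    (hpn : p + 2 ≤ n) {A c m M a : ℝ} (hc : 0 < c) (hm : 0 < m) (hδA : δ ≤ A)
    (hσm : m ≤ a * esymm n (p + 1) μ + esymm n (p + 2) μ)
    (hσM : a * esymm n (p + 1) μ + esymm n (p + 2) μ ≤ M)
    (ha : 2 * n.choose (p + 2) * A * (1 + M / (c * m)) ≤ a)
    (hneg : esymm n (p + 2) μ < -c * (a * esymm n (p + 1) μ + esymm n (p + 2) μ)) :
    μ ⟨p, by omega⟩ ≤ 2 * (n.choose (p + 1) + 1) * δ := by
  by_contra! hlt
  obtain ⟨G, hG, hlow, hhigh⟩ := exists_esymm_bounds_of_mul_lt hμ hδ hμδ (by omega) hlt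
  set N : ℝ := (n.choose (p + 2) : ℝ)
  have hN : 0 < N := Nat.cast_pos.2 (Nat.choose_pos hpn)
  have hM : 0 < M := hm.trans_le (hσm.trans hσM)
  have hcm : 0 < c * m := mul_pos hc hm
  have hA : 0 ≤ A := hδ.trans hδA
  have hMcm : 0 ≤ M / (c * m) := div_nonneg hM.le hcm.le
  have ha0 : 0 ≤ a := le_trans (by positivity) ha
  have hNδG : N * (δ * G) ≤ N * A * G := by
    linarith [mul_le_mul_of_nonneg_left (mul_le_mul_of_nonneg_right hδA hG.le) hN.le]
  have hsmall : c * m < N * A * G := by linarith [mul_le_mul_of_nonneg_left hσm hc.le]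
  have hlarge : N * A * G * (M / (c * m)) ≤ M := by
    linarith [mul_le_mul_of_nonneg_right ha hG.le, mul_le_mul_of_nonneg_left hhigh ha0]
  rw [mul_div_assoc', div_le_iff₀ hcm] at hlarge
  linarith [mul_lt_mul_of_pos_left hsmall hM]
end

/-- **Claim 1 in the proof of Lemma 1.8.** For `2 ≤ k ≤ n - 1`,
`A > 0`, `0 < m ≤ M` and `c₀ = 1/(2(k+2)² - 1)`, there are `Λ > 0` and `C > 0`
(depending only on `n, k, A, m, M`) such that every decreasing `λ ∈ Γ_k` with
`λ_n > -A`, `m ≤ σ_k(λ) ≤ M`, `λ_1 ≥ Λ` and `σ_k(λ|1) < -c₀·σ_k(λ)` satisfies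
`λ_k ≤ C·|λ_n|`. (Indices are 0-based.) -/
theorem stmt11 (n k : ℕ) (hk : 2 ≤ k) (hkn : k + 1 ≤ n)
    (A m M : ℝ) (hA : 0 < A) (hm : 0 < m) (hmM : m ≤ M) :
    ∃ Λ : ℝ, 0 < Λ ∧ ∃ C : ℝ, 0 < C ∧
      ∀ lam : Fin n → ℝ,
        lam ∈ GardingCone n k →
        (∀ i j : Fin n, i ≤ j → lam j ≤ lam i) →
        -A < lam ⟨n - 1, by omega⟩ →
        m ≤ esymm n k lam → esymm n k lam ≤ M →
        Λ ≤ lam ⟨0, by omega⟩ →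
        esymmR n k lam {(⟨0, by omega⟩ : Fin n)}
          < -(1 / (2 * ((k : ℝ) + 2) ^ 2 - 1)) * esymm n k lam →
        lam ⟨k - 1, by omega⟩ ≤ C * |lam ⟨n - 1, by omega⟩| := by
  obtain ⟨p, rfl⟩ : ∃ p, k = p + 2 := ⟨k - 2, by omega⟩
  obtain ⟨n, rfl⟩ : ∃ n', n = n' + 1 := ⟨n - 1, by omega⟩
  set c : ℝ := 1 / (2 * (((p + 2 : ℕ) : ℝ) + 2) ^ 2 - 1)
  have hc : 0 < c := one_div_pos.2 (by push_cast; nlinarith [Nat.cast_nonneg (α := ℝ) p])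
  have hN : 0 < (n.choose (p + 2) : ℝ) := Nat.cast_pos.2 (Nat.choose_pos (by omega))
  have hMcm : 0 ≤ M / (c * m) := div_nonneg (hm.le.trans hmM) (mul_pos hc hm).le
  refine ⟨2 * n.choose (p + 2) * A * (1 + M / (c * m)), by positivity,
    2 * (n.choose (p + 1) + 1), by positivity, ?_⟩
  intro lam _ hdec hlast hσm hσM hΛ hneg
  rw [show (⟨n + 1 - 1, _⟩ : Fin (n + 1)) = Fin.last n from Fin.ext (by simp)] at hlast ⊢
  rw [Fin.zero_eta] at hΛ hneg
  rw [esymm_succ_succ] at hσm hσM hneg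
  rw [esymmR_zero] at hneg
  have hδ := le_mul_of_esymm_lt_neg (μ := Fin.tail lam) (δ := max (-lam (Fin.last n)) 0)
    (fun i j h => hdec _ _ (Fin.succ_le_succ_iff.2 h)) (le_max_right _ _)
    (fun i => neg_le.1 ((neg_le_neg (hdec _ _ (Fin.le_last i.succ))).trans (le_max_left _ _)))
    (by omega) hc hm (max_le (by linarith) hA.le) hσm hσM hΛ hneg
  calc lam ⟨p + 2 - 1, _⟩ = Fin.tail lam ⟨p, by omega⟩ := rfl
    _ ≤ _ := hδ
    _ ≤ _ := by gcongr; exact max_le (neg_le_abs _) (abs_nonneg _)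
end
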